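/- For all natural numbers i, j and real k, b_{i+1,j+1,k} = (j+1) · b_{i,j,k+1} + k · b_{i,j+1,k}. -/
import Mathlib


open Finset

noncomputable def msn (i j : ℕ) (k : ℝ) : ℝ :=
  ∑ r ∈ Finset.range (j + 1), (j.choose r : ℝ) * (-1 : ℝ) ^ (j - r) * ((r : ℝ) + k) ^ i

theorem stmt (i j : ℕ) (k : ℝ) : msn (i + 1) (j + 1) k = ((j : ℝ) + 1) * msn i j (k + 1) + k * msn i (j + 1) k := by
  have h1 : (∑ r ∈ Finset.range (j + 1 + 1),
      ((j+1).choose r : ℝ) * (-1 : ℝ) ^ (j + 1 - r) * ((r : ℝ) * ((r : ℝ) + k) ^ i))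
      = ((j : ℝ) + 1) * msn i j (k + 1) := by
    rw [Finset.sum_range_succ']
    simp only [Nat.cast_zero, zero_mul, mul_zero, add_zero]
    rw [msn, Finset.mul_sum]
    refine Finset.sum_congr rfl fun r hr => ?_
    have hc : ((j+1).choose (r+1) : ℝ) * ((r : ℝ) + 1) = ((j : ℝ) + 1) * (j.choose r : ℝ) := by
      have := Nat.add_one_mul_choose_eq j r
      have := congrArg (fun n : ℕ => (n : ℝ)) this
      push_cast at this
      linarith
    have hsub : j + 1 - (r + 1) = j - r := by omega
    rw [hsub]
    push_cast
    linear_combination ((-1 : ℝ) ^ (j - r) * ((r : ℝ) + 1 + k) ^ i) * hc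
  have h2 : msn (i+1) (j+1) k - k * msn i (j+1) k
      = ∑ r ∈ Finset.range (j + 1 + 1),
        ((j+1).choose r : ℝ) * (-1 : ℝ) ^ (j + 1 - r) * ((r : ℝ) * ((r : ℝ) + k) ^ i) := by
    rw [msn, msn, Finset.mul_sum, ← Finset.sum_sub_distrib]
    refine Finset.sum_congr rfl fun r hr => ?_
    ring
  linarith
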